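/- Let (V, ν, τ, τ*) be a finite dimensional PN space where τ* is Archimedean, ν_p ≠ ε_∞ for all p, ν(V) ⊆ D⁺ and D⁺ is invariant under τ, over the real field equipped with a probabilistic norm ν' having the LG-property. Then a subset A of V is D-compact if and only if A is D-bounded and closed. -/

import Mathlib

open Filter Topology

noncomputable section

/-- A distance distribution function: nondecreasing, left-continuous,
vanishing on `(-∞,0]`, bounded by `1`. -/
def DDF (F : ℝ → ℝ) : Prop :=
  Monotone F ∧ (∀ x ≤ 0, F x = 0) ∧ (∀ x, F x ≤ 1) ∧
    ∀ x, Tendsto F (nhdsWithin x (Set.Iio x)) (nhds (F x))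

/-- The unit step at `0`. -/
def eps0 : ℝ → ℝ := fun x => if x ≤ 0 then 0 else 1

/-- The unit step at `c`. -/
def epsc (c : ℝ) : ℝ → ℝ := fun x => if x ≤ c then 0 else 1

/-- `ε∞`: identically 0 on `ℝ` (value 1 only at `+∞`). -/
def epsInf : ℝ → ℝ := fun _ => 0

/-- Membership in `D⁺`: the distribution function tends to `1` at `+∞`. -/
def InDPlus (F : ℝ → ℝ) : Prop := Tendsto F atTop (nhds 1)

/-- Weak convergence of distribution functions. -/
def WeakConv (Fn : ℕ → ℝ → ℝ) (F : ℝ → ℝ) : Prop :=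
  ∀ x, ContinuousAt F x → Tendsto (fun n => Fn n x) atTop (nhds (F x))

/-- A continuous triangle function on `Δ⁺`. -/
def IsTriangleFunction (τ : (ℝ → ℝ) → (ℝ → ℝ) → (ℝ → ℝ)) : Prop :=
  (∀ F G, DDF F → DDF G → DDF (τ F G)) ∧
  (∀ F G H, DDF F → DDF G → DDF H → τ (τ F G) H = τ F (τ G H)) ∧
  (∀ F G, DDF F → DDF G → τ F G = τ G F) ∧
  (∀ F G H, DDF F → DDF G → DDF H → F ≤ G → τ F H ≤ τ G H) ∧
  (∀ F, DDF F → τ F eps0 = F) ∧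
  (∀ (Fn : ℕ → ℝ → ℝ) F G, (∀ n, DDF (Fn n)) → DDF F → DDF G →
    WeakConv Fn F → WeakConv (fun n => τ (Fn n) G) (τ F G))

/-- A probabilistic normed space `(V, ν, τ, τ*)`. -/
structure IsPNSpace (V : Type) [AddCommGroup V] [Module ℝ V]
    (ν : V → ℝ → ℝ) (τ τs : (ℝ → ℝ) → (ℝ → ℝ) → (ℝ → ℝ)) : Prop where
  ddf : ∀ p, DDF (ν p)
  tri : IsTriangleFunction τ
  tris : IsTriangleFunction τs
  tle : ∀ F G, DDF F → DDF G → τ F G ≤ τs F G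
  n1 : ∀ p, ν p = eps0 ↔ p = 0
  n2 : ∀ p, ν (-p) = ν p
  n3 : ∀ p q, τ (ν p) (ν q) ≤ ν (p + q)
  n4 : ∀ (p : V) (l : ℝ), 0 ≤ l → l ≤ 1 →
    ν p ≤ τs (ν (l • p)) (ν ((1 - l) • p))

/-- Archimedean triangle function: no idempotents besides `ε₀` and `ε∞`. -/
def IsArchimedean (τ : (ℝ → ℝ) → (ℝ → ℝ) → (ℝ → ℝ)) : Prop :=
  ∀ F, DDF F → τ F F = F → F = eps0 ∨ F = epsInf

/-- Strong convergence of a sequence in a PN space. -/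
def StrongConv {V : Type} [AddCommGroup V] (ν : V → ℝ → ℝ)
    (q : ℕ → V) (p : V) : Prop :=
  ∀ l : ℝ, 0 < l → ∀ᶠ n in atTop, ν (q n - p) l > 1 - l

/-- Strongly Cauchy sequence in a PN space. -/
def StrongCauchy {V : Type} [AddCommGroup V] (ν : V → ℝ → ℝ) (q : ℕ → V) : Prop :=
  ∀ l : ℝ, 0 < l → ∃ N, ∀ m n, N ≤ m → N ≤ n → ν (q m - q n) l > 1 - l

/-- `A` is `D`-bounded: some `G ∈ D⁺` lies below all `ν p`, `p ∈ A`. -/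
def DBounded {V : Type} (ν : V → ℝ → ℝ) (A : Set V) : Prop :=
  ∃ G : ℝ → ℝ, DDF G ∧ InDPlus G ∧ ∀ p ∈ A, G ≤ ν p

/-- `A` is `D`-compact: every sequence in `A` has a subsequence strongly
convergent to a point of `A`. -/
def DCompact {V : Type} [AddCommGroup V] (ν : V → ℝ → ℝ) (A : Set V) : Prop :=
  ∀ q : ℕ → V, (∀ n, q n ∈ A) → ∃ φ : ℕ → ℕ, StrictMono φ ∧
    ∃ p ∈ A, StrongConv ν (q ∘ φ) p

/-- `A` is closed under strong convergence of sequences. -/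
def SeqClosed {V : Type} [AddCommGroup V] (ν : V → ℝ → ℝ) (A : Set V) : Prop :=
  ∀ (q : ℕ → V) (p : V), (∀ n, q n ∈ A) → StrongConv ν q p → p ∈ A

/-- The probabilistic radius `R_A(x) = l⁻ inf {ν p x : p ∈ A}`. -/
def probRadius {V : Type} (ν : V → ℝ → ℝ) (A : Set V) (x : ℝ) : ℝ :=
  ⨆ y : Set.Iio x, ⨅ p : A, ν (p : V) (y : ℝ)

/-!
Everything rests on the Archimedean property of `τ*`: a distribution function `F` with
`F ≤ τ* F F` is `ε₀` or `ε∞`. By axiom (N4), `sup_k ν(2⁻ᵏ p)` is such an `F` and lies above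
`ν p ≠ ε∞`, so `ν(t p) → ε₀` strongly as `t → 0`; hence convergence of coordinates in a basis
implies strong convergence in `V`. Likewise, using the continuity of `τ*`, the left-continuous
regularization of `inf_k ν(2ᵏ e)` is idempotent and is `ε∞` as soon as `e ≠ 0`. So if a
`D`-bounded set (`G ≤ ν` on `A`, `G ∈ D⁺`) had unbounded coordinates, a normalized limit
direction `u ≠ 0` would satisfy `G ≤ ν(2ᵏ u)` for all `k`, which is absurd. Bolzano–Weierstrass
in coordinates then makes bounded closed sets `D`-compact. Conversely, strong limits are unique,
so `D`-compact sets are closed, and `D`-compactness forces the probabilistic radius `R_A` to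
tend to `1`.
-/

open Set Function

lemma Monotone.dense_setOf_continuousAt {f : ℝ → ℝ} (hf : Monotone f) :
    Dense {x | ContinuousAt f x} := by
  simpa only [compl_ofPred, not_not] using hf.countable_not_continuousAt.dense_compl ℝ

namespace DDF

variable {F G : ℝ → ℝ}

lemma nonneg (hF : DDF F) (x : ℝ) : 0 ≤ F x := by
  rcases le_or_gt x 0 with hx | hx
  · rw [hF.2.1 x hx]
  · rw [← hF.2.1 0 le_rfl]
    exact hF.1 hx.le

lemma le_one (hF : DDF F) (x : ℝ) : F x ≤ 1 :=
  hF.2.2.1 x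

lemma le_eps0 (hF : DDF F) : F ≤ eps0 := by
  intro x
  by_cases hx : x ≤ 0
  · simp [eps0, hx, hF.2.1 x hx]
  · simpa [eps0, hx] using hF.le_one x

lemma eq_eps0_of_forall_lt (hF : DDF F) (h : ∀ l, 0 < l → 1 - l < F l) : F = eps0 := by
  refine le_antisymm hF.le_eps0 fun x => ?_
  by_cases hx : x ≤ 0
  · simp [eps0, hx, hF.nonneg x]
  rw [eps0, if_neg hx]
  refine le_of_forall_pos_lt_add fun ε hε => ?_
  have hmono : F (min ε x) ≤ F x := hF.1 (min_le_right ε x)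
  have := h (min ε x) (lt_min hε (not_le.mp hx))
  linarith [min_le_left ε x]

lemma le_of_forall_mem_dense (hF : DDF F) (hG : Monotone G) {S : Set ℝ} (hS : Dense S)
    (h : ∀ x ∈ S, F x ≤ G x) : F ≤ G := by
  intro x
  refine le_of_tendsto (hF.2.2.2 x) (eventually_nhdsWithin_of_forall fun y hy => ?_)
  obtain ⟨s, hsS, hys, hsx⟩ := hS.exists_between (mem_Iio.mp hy)
  exact (hF.1 hys.le).trans ((h s hsS).trans (hG hsx.le))

lemma of_leftLim_eq (hm : Monotone F) (h0 : ∀ x ≤ 0, F x = 0) (h1 : ∀ x, F x ≤ 1)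
    (hlim : ∀ x, leftLim F x = F x) : DDF F :=
  ⟨hm, h0, h1, fun x => (hm.continuousWithinAt_Iio_iff_leftLim_eq).2 (hlim x)⟩

lemma leftLim_of_monotone (hm : Monotone F) (h0 : ∀ x ≤ 0, F x = 0) (h1 : ∀ x, F x ≤ 1) :
    DDF (leftLim F) := by
  refine ⟨hm.leftLim, fun x hx => le_antisymm ?_ ?_, fun x => (hm.leftLim_le le_rfl).trans (h1 x),
    fun x => (continuousWithinAt_leftLim_Iic (hm.tendsto_leftLim x)).mono Iio_subset_Iic_self⟩
  · exact (hm.leftLim_le le_rfl).trans (h0 x hx).le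
  · exact (h0 (x - 1) (by linarith)).symm.le.trans (hm.le_leftLim (sub_one_lt x))

variable {ι : Type*} {g : ι → ℝ → ℝ}

lemma bddAbove_range (hg : ∀ i, DDF (g i)) (x : ℝ) : BddAbove (range fun i => g i x) :=
  ⟨1, by rintro _ ⟨i, rfl⟩; exact (hg i).le_one x⟩

lemma bddBelow_range (hg : ∀ i, DDF (g i)) (x : ℝ) : BddBelow (range fun i => g i x) :=
  ⟨0, by rintro _ ⟨i, rfl⟩; exact (hg i).nonneg x⟩

lemma iSup [Nonempty ι] (hg : ∀ i, DDF (g i)) : DDF (fun x => ⨆ i, g i x) := by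
  have hm : Monotone (fun x => ⨆ i, g i x) := fun x y hxy =>
    ciSup_mono (bddAbove_range hg y) fun i => (hg i).1 hxy
  refine .of_leftLim_eq hm (fun x hx => by simp [(hg _).2.1 x hx])
    (fun x => ciSup_le fun i => (hg i).le_one x) fun x => le_antisymm (hm.leftLim_le le_rfl) ?_
  refine ciSup_le fun i => le_of_tendsto ((hg i).2.2.2 x) ?_
  exact eventually_nhdsWithin_of_forall fun y hy =>
    (le_ciSup (bddAbove_range hg y) i).trans (hm.le_leftLim hy)

lemma monotone_iInf [Nonempty ι] (hg : ∀ i, DDF (g i)) : Monotone (fun x => ⨅ i, g i x) :=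
  fun x _ hxy => ciInf_mono (bddBelow_range hg x) fun i => (hg i).1 hxy

lemma leftLim_iInf [Nonempty ι] (hg : ∀ i, DDF (g i)) : DDF (leftLim fun x => ⨅ i, g i x) := by
  refine .leftLim_of_monotone (monotone_iInf hg) (fun x hx => by simp [(hg _).2.1 x hx]) fun x => ?_
  exact (ciInf_le (bddBelow_range hg x) (Classical.arbitrary ι)).trans ((hg _).le_one x)

lemma leftLim_iInf_le [Nonempty ι] (hg : ∀ i, DDF (g i)) (i : ι) :
    leftLim (fun x => ⨅ i, g i x) ≤ g i := fun x =>
  ((monotone_iInf hg).leftLim_le le_rfl).trans (ciInf_le (bddBelow_range hg x) i)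

/-- The regularized infimum agrees with the infimum at its own continuity points. -/
lemma weakConv_leftLim_iInf {g : ℕ → ℝ → ℝ} (hg : ∀ k, DDF (g k)) (hanti : Antitone g) :
    WeakConv g (leftLim fun x => ⨅ k, g k x) := by
  intro y hy
  have hm := monotone_iInf hg
  have hy' : leftLim (fun x => ⨅ k, g k x) y = ⨅ k, g k y := by
    refine le_antisymm (hm.leftLim_le le_rfl) (ge_of_tendsto (hy.tendsto.mono_left
      (nhdsWithin_le_nhds (s := Ioi y)))
      (eventually_nhdsWithin_of_forall fun z hz => hm.le_leftLim hz))
  rw [hy']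
  exact tendsto_atTop_ciInf (fun a b hab => hanti hab y) (bddBelow_range hg y)

end DDF

/-- `stepDF δ ≤ F` says `F ≥ 1 - δ` on `(δ, ∞)`: these steps describe the strong
neighbourhoods of `ε₀`. -/
def stepDF (δ : ℝ) : ℝ → ℝ := fun x => if x ≤ δ then 0 else 1 - δ

section stepDF

variable {δ : ℝ}

lemma ddf_stepDF (h0 : 0 ≤ δ) (h1 : δ ≤ 1) : DDF (stepDF δ) := by
  refine ⟨fun a b hab => ?_, fun x hx => if_pos (hx.trans h0), fun x => ?_, fun x => ?_⟩
  · simp only [stepDF]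
    split_ifs <;> linarith
  · simp only [stepDF]
    split_ifs <;> linarith
  rcases le_or_gt x δ with hx | hx
  · refine tendsto_const_nhds.congr' (eventually_nhdsWithin_of_forall fun y hy => ?_)
    simp only [stepDF, if_pos hx, if_pos ((mem_Iio.mp hy).le.trans hx)]
  · refine tendsto_const_nhds.congr' ?_
    filter_upwards [Ioo_mem_nhdsLT hx] with y hy
    simp only [stepDF, if_neg (not_le.mpr hx), if_neg (not_le.mpr hy.1)]

lemma stepDF_anti {δ' : ℝ} (hδ : δ ≤ δ') (h1 : δ ≤ 1) : stepDF δ' ≤ stepDF δ := by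
  intro x
  simp only [stepDF]
  split_ifs <;> linarith

lemma stepDF_le {F : ℝ → ℝ} (hF : DDF F) (h : 1 - δ < F δ) : stepDF δ ≤ F := by
  intro x
  by_cases hx : x ≤ δ
  · simpa only [stepDF, if_pos hx] using hF.nonneg x
  · simp only [stepDF, if_neg hx]
    exact h.le.trans (hF.1 (not_le.mp hx).le)

lemma continuousAt_stepDF {x : ℝ} (hx : x ≠ δ) : ContinuousAt (stepDF δ) x := by
  rcases hx.lt_or_gt with hx | hx
  · refine (continuousAt_const (y := (0 : ℝ))).congr ?_
    filter_upwards [Iio_mem_nhds hx] with y hy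
    exact (if_pos (mem_Iio.mp hy).le).symm
  · refine (continuousAt_const (y := 1 - δ)).congr ?_
    filter_upwards [Ioi_mem_nhds hx] with y hy
    exact (if_neg (not_le.mpr (mem_Ioi.mp hy))).symm

lemma weakConv_stepDF_eps0 {δ : ℕ → ℝ} (hpos : ∀ m, 0 < δ m)
    (hδ : Tendsto δ atTop (𝓝 0)) : WeakConv (fun m => stepDF (δ m)) eps0 := by
  intro y _
  rcases le_or_gt y 0 with hy | hy
  · simp only [stepDF, eps0, if_pos hy, if_pos (hy.trans (hpos _).le)]
    exact tendsto_const_nhds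
  · rw [show eps0 y = 1 - 0 from if_neg (not_le.mpr hy) |>.trans (sub_zero 1).symm]
    refine (hδ.const_sub 1).congr' ?_
    filter_upwards [hδ.eventually (gt_mem_nhds hy)] with m hm
    exact (if_neg (not_le.mpr hm)).symm

lemma ddf_eps0 : DDF eps0 := by
  convert ddf_stepDF le_rfl zero_le_one using 1
  funext x
  simp [stepDF, eps0]

lemma inDPlus_eps0 : InDPlus eps0 := by
  refine tendsto_const_nhds.congr' ?_
  filter_upwards [eventually_gt_atTop 0] with x hx
  exact (if_neg (not_le.mpr hx)).symm

end stepDF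

namespace IsTriangleFunction

variable {τ : (ℝ → ℝ) → (ℝ → ℝ) → (ℝ → ℝ)} (ht : IsTriangleFunction τ)
  {F F' G G' H : ℝ → ℝ}
include ht

lemma ddf (hF : DDF F) (hG : DDF G) : DDF (τ F G) :=
  ht.1 F G hF hG

lemma comm (hF : DDF F) (hG : DDF G) : τ F G = τ G F :=
  ht.2.2.1 F G hF hG

lemma mono_left (hF : DDF F) (hF' : DDF F') (hG : DDF G) (hle : F ≤ F') : τ F G ≤ τ F' G :=
  ht.2.2.2.1 F F' G hF hF' hG hle

lemma mono_right (hF : DDF F) (hG : DDF G) (hG' : DDF G') (hle : G ≤ G') : τ F G ≤ τ F G' := by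
  rw [ht.comm hF hG, ht.comm hF hG']
  exact ht.mono_left hG hG' hF hle

lemma mono (hF : DDF F) (hF' : DDF F') (hG : DDF G) (hG' : DDF G') (hFF : F ≤ F')
    (hGG : G ≤ G') : τ F G ≤ τ F' G' :=
  (ht.mono_left hF hF' hG hFF).trans (ht.mono_right hF' hG hG' hGG)

lemma eps0_left (hF : DDF F) : τ eps0 F = F := by
  rw [ht.comm ddf_eps0 hF]
  exact ht.2.2.2.2.1 F hF

lemma le_left (hF : DDF F) (hG : DDF G) : τ F G ≤ F := by
  calc τ F G ≤ τ eps0 F := by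
        rw [ht.comm hF hG]
        exact ht.mono_left hG ddf_eps0 hF hG.le_eps0
    _ = F := ht.eps0_left hF

lemma tendsto_apply_of_weakConv {g : ℕ → ℝ → ℝ} (hg : ∀ k, DDF (g k)) (hF : DDF F)
    (hG : DDF G) (hconv : WeakConv g F) {x : ℝ} (hx : ContinuousAt (τ F G) x) :
    Tendsto (fun k => τ (g k) G x) atTop (𝓝 (τ F G x)) :=
  ht.2.2.2.2.2 g F G hg hF hG hconv x hx

lemma exists_lt_tau_stepDF_apply (hG : DDF G) {x c : ℝ} (hx : ContinuousAt G x)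
    (hc : c < G x) : ∃ δ, 0 < δ ∧ δ ≤ 1 ∧ c < τ (stepDF δ) G x := by
  have hpos : ∀ m : ℕ, 0 < 1 / ((m : ℝ) + 1) := fun m => by positivity
  have hle : ∀ m : ℕ, 1 / ((m : ℝ) + 1) ≤ 1 := fun m =>
    (div_le_one (by positivity)).2 (by simp)
  have hlim := ht.tendsto_apply_of_weakConv (fun m => ddf_stepDF (hpos m).le (hle m))
    ddf_eps0 hG (weakConv_stepDF_eps0 hpos tendsto_one_div_add_atTop_nhds_zero_nat)
    (x := x) (by rwa [ht.eps0_left hG])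
  rw [ht.eps0_left hG] at hlim
  obtain ⟨m, hm⟩ := (hlim.eventually (lt_mem_nhds hc)).exists
  exact ⟨_, hpos m, hle m, hm⟩

lemma le_of_forall_tau_stepDF_le (hF : DDF F) (hG : DDF G)
    (h : ∀ δ, 0 < δ → δ ≤ 1 → τ (stepDF δ) G ≤ F) : G ≤ F := by
  refine hG.le_of_forall_mem_dense hF.1 hG.1.dense_setOf_continuousAt fun x hx => ?_
  by_contra! hlt
  obtain ⟨δ, hδ0, hδ1, hδ⟩ := ht.exists_lt_tau_stepDF_apply hG hx hlt
  exact hδ.not_ge (h δ hδ0 hδ1 x)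

/-- The continuity axiom of `τ` gives this at the continuity points of `τ F G`. -/
lemma le_tau_of_weakConv {g : ℕ → ℝ → ℝ} (hg : ∀ k, DDF (g k)) (hF : DDF F) (hG : DDF G)
    (hconv : WeakConv g F) (hH : DDF H) (hle : ∀ᶠ k in atTop, H ≤ τ (g k) G) : H ≤ τ F G :=
  hH.le_of_forall_mem_dense (ht.ddf hF hG).1 (ht.ddf hF hG).1.dense_setOf_continuousAt
    fun _ hx => ge_of_tendsto (ht.tendsto_apply_of_weakConv hg hF hG hconv hx)
      (hle.mono fun _ hk => hk _)

end IsTriangleFunction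

lemma IsArchimedean.eq_eps0_or_eq_epsInf {τ : (ℝ → ℝ) → (ℝ → ℝ) → (ℝ → ℝ)}
    (harch : IsArchimedean τ) (ht : IsTriangleFunction τ) {F : ℝ → ℝ} (hF : DDF F)
    (h : F ≤ τ F F) : F = eps0 ∨ F = epsInf :=
  harch F hF (le_antisymm (ht.le_left hF hF) h)

/-- Strong convergence to `ε₀`: `StrongConv ν q p` is `TendstoEps0 fun n => ν (q n - p)`. -/
def TendstoEps0 (F : ℕ → ℝ → ℝ) : Prop :=
  ∀ l : ℝ, 0 < l → ∀ᶠ n in atTop, F n l > 1 - l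

namespace TendstoEps0

variable {F G : ℕ → ℝ → ℝ}

lemma mono (hF : TendstoEps0 F) (hle : ∀ n, F n ≤ G n) : TendstoEps0 G := fun l hl =>
  (hF l hl).mono fun n hn => lt_of_lt_of_le hn (hle n l)

lemma tau {τ : (ℝ → ℝ) → (ℝ → ℝ) → (ℝ → ℝ)} (ht : IsTriangleFunction τ)
    (hFd : ∀ n, DDF (F n)) (hGd : ∀ n, DDF (G n)) (hF : TendstoEps0 F) (hG : TendstoEps0 G) :
    TendstoEps0 (fun n => τ (F n) (G n)) := by
  intro l hl
  rcases lt_or_ge 1 l with hl1 | hl1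
  · exact .of_forall fun n => (sub_neg.mpr hl1).trans_le ((ht.ddf (hFd n) (hGd n)).nonneg l)
  have hK : DDF (stepDF (l / 2)) := ddf_stepDF (by linarith) (by linarith)
  have hKl : 1 - l < stepDF (l / 2) l := by
    rw [stepDF, if_neg (by linarith)]
    linarith
  obtain ⟨δ₀, hδ₀, hδ₀1, hlt⟩ :=
    ht.exists_lt_tau_stepDF_apply hK (continuousAt_stepDF (by linarith)) hKl
  set δ := min δ₀ (l / 2)
  have hδ : 0 < δ := lt_min hδ₀ (by linarith)
  have hδ1 : δ ≤ 1 := (min_le_left _ _).trans hδ₀1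
  filter_upwards [hF δ hδ, hG δ hδ] with n hFn hGn
  calc 1 - l < τ (stepDF δ₀) (stepDF (l / 2)) l := hlt
    _ ≤ τ (stepDF δ) (stepDF δ) l :=
        ht.mono (ddf_stepDF hδ₀.le hδ₀1) (ddf_stepDF hδ.le hδ1) hK (ddf_stepDF hδ.le hδ1)
          (stepDF_anti (min_le_left _ _) hδ1) (stepDF_anti (min_le_right _ _) hδ1) l
    _ ≤ τ (F n) (G n) l :=
        ht.mono (ddf_stepDF hδ.le hδ1) (hFd n) (ddf_stepDF hδ.le hδ1) (hGd n)
          (stepDF_le (hFd n) hFn) (stepDF_le (hGd n) hGn) l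

end TendstoEps0

lemma StrongConv.comp_strictMono {V : Type} [AddCommGroup V] {ν : V → ℝ → ℝ} {q : ℕ → V}
    {p : V} (hq : StrongConv ν q p) {φ : ℕ → ℕ} (hφ : StrictMono φ) : StrongConv ν (q ∘ φ) p :=
  fun l hl => hφ.tendsto_atTop.eventually (hq l hl)

lemma probRadius_eq_leftLim {V : Type} {ν : V → ℝ → ℝ} (hν : ∀ p, DDF (ν p)) {A : Set V}
    (hA : A.Nonempty) : probRadius ν A = leftLim fun y => ⨅ p : A, ν p y := by
  have := hA.to_subtype
  funext x
  rw [(DDF.monotone_iInf fun p : A => hν p).leftLim_eq_sSup, sSup_image']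
  rfl

namespace IsPNSpace

variable {V : Type} [AddCommGroup V] [Module ℝ V] {ν : V → ℝ → ℝ}
  {τ τs : (ℝ → ℝ) → (ℝ → ℝ) → (ℝ → ℝ)} (h : IsPNSpace V ν τ τs)
include h

lemma nu_sub_comm (p q : V) : ν (p - q) = ν (q - p) := by
  rw [← h.n2, neg_sub]

lemma nu_zero : ν 0 = eps0 :=
  (h.n1 0).2 rfl

lemma nu_le_nu_smul {l : ℝ} (p : V) (h0 : 0 ≤ l) (h1 : l ≤ 1) : ν p ≤ ν (l • p) :=
  (h.n4 p l h0 h1).trans (h.tris.le_left (h.ddf _) (h.ddf _))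

lemma nu_smul_le_of_abs_le (p : V) {a b : ℝ} (hab : |a| ≤ |b|) : ν (b • p) ≤ ν (a • p) := by
  rcases eq_or_ne b 0 with rfl | hb
  · rw [abs_zero, abs_nonpos_iff] at hab
    rw [hab]
  have hl : |a / b| ≤ 1 := by rwa [abs_div, div_le_one (abs_pos.mpr hb)]
  have hab' : (a / b) • b • p = a • p := by rw [smul_smul, div_mul_cancel₀ a hb]
  rcases le_or_gt 0 (a / b) with hpos | hneg
  · simpa only [hab'] using h.nu_le_nu_smul (b • p) hpos ((le_abs_self _).trans hl)
  · simpa only [neg_smul, h.n2, hab'] using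
      h.nu_le_nu_smul (b • p) (neg_nonneg.mpr hneg.le) ((neg_le_abs _).trans hl)

lemma nu_two_smul_le (p : V) : ν ((2 : ℝ) • p) ≤ τs (ν p) (ν p) := by
  have h4 := h.n4 ((2 : ℝ) • p) 2⁻¹ (by norm_num) (by norm_num)
  rwa [show (1 : ℝ) - 2⁻¹ = 2⁻¹ by norm_num, smul_smul, inv_mul_cancel₀ two_ne_zero,
    one_smul] at h4

lemma stepDF_tau_le_nu_add {δ : ℝ} (hδ0 : 0 ≤ δ) (hδ1 : δ ≤ 1) {d : V} (hd : stepDF δ ≤ ν d)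
    (a : V) : τ (stepDF δ) (ν a) ≤ ν (d + a) :=
  (h.tri.mono_left (ddf_stepDF hδ0 hδ1) (h.ddf d) (h.ddf a) hd).trans (h.n3 d a)

lemma strongConv_unique {q : ℕ → V} {p p' : V} (hp : StrongConv ν q p)
    (hp' : StrongConv ν q p') : p = p' := by
  have hsum : TendstoEps0 fun n => τ (ν (p - q n)) (ν (q n - p')) := by
    refine TendstoEps0.tau h.tri (fun _ => h.ddf _) (fun _ => h.ddf _) (fun l hl => ?_) hp'
    simpa only [h.nu_sub_comm p] using hp l hl
  have hconst : TendstoEps0 fun _ => ν (p - p') :=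
    hsum.mono fun n => by simpa only [sub_add_sub_cancel] using h.n3 (p - q n) (q n - p')
  refine sub_eq_zero.mp ((h.n1 _).mp ((h.ddf _).eq_eps0_of_forall_lt fun l hl => ?_))
  obtain ⟨_, hn⟩ := (hconst l hl).exists
  exact hn

lemma le_nu_of_strongConv {G : ℝ → ℝ} (hG : DDF G) {q : ℕ → V} {p : V}
    (hq : StrongConv ν q p) (hle : ∀ᶠ n in atTop, G ≤ ν (q n)) : G ≤ ν p := by
  refine h.tri.le_of_forall_tau_stepDF_le (h.ddf p) hG fun δ hδ hδ1 => ?_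
  obtain ⟨n, hn, hGn⟩ := ((hq δ hδ).and hle).exists
  have hd : stepDF δ ≤ ν (p - q n) := stepDF_le (h.ddf _) (by rwa [h.nu_sub_comm])
  calc τ (stepDF δ) G ≤ τ (stepDF δ) (ν (q n)) :=
        h.tri.mono_right (ddf_stepDF hδ.le hδ1) hG (h.ddf _) hGn
    _ ≤ ν (p - q n + q n) := h.stepDF_tau_le_nu_add hδ.le hδ1 hd _
    _ = ν p := by rw [sub_add_cancel]

lemma nu_apply_le_of_strongConv {q : ℕ → V} {p : V} (hq : StrongConv ν q p) {x c : ℝ}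
    (hx : ContinuousAt (ν p) x) (hle : ∀ᶠ n in atTop, ν (q n) x ≤ c) : ν p x ≤ c := by
  by_contra! hlt
  obtain ⟨δ, hδ, hδ1, hc⟩ := h.tri.exists_lt_tau_stepDF_apply (h.ddf p) hx hlt
  obtain ⟨n, hn, hcn⟩ := ((hq δ hδ).and hle).exists
  have hqn := h.stepDF_tau_le_nu_add hδ.le hδ1 (stepDF_le (h.ddf _) hn) p x
  rw [sub_add_cancel] at hqn
  linarith

lemma seqClosed_of_dCompact {A : Set V} (hA : DCompact ν A) : SeqClosed ν A := by
  intro q p hq hqp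
  obtain ⟨φ, hφ, p', hp'A, hp'⟩ := hA q hq
  rwa [h.strongConv_unique (hqp.comp_strictMono hφ) hp']

lemma exists_forall_lt_nu_of_dCompact (hD : ∀ p : V, InDPlus (ν p)) {A : Set V}
    (hA : DCompact ν A) {c : ℝ} (hc : c < 1) : ∃ x, ∀ p ∈ A, c < ν p x := by
  by_contra! hcon
  choose P hPA hP using fun n : ℕ => hcon n
  obtain ⟨φ, hφ, p, -, hp⟩ := hA P hPA
  obtain ⟨X, hX⟩ := eventually_atTop.1 ((hD p).eventually (lt_mem_nhds hc))
  obtain ⟨x, hx, hXx, -⟩ := (h.ddf p).1.dense_setOf_continuousAt.exists_between (lt_add_one X)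
  refine (hX x hXx.le).not_ge (h.nu_apply_le_of_strongConv hp hx ?_)
  filter_upwards [(tendsto_natCast_atTop_atTop.comp hφ.tendsto_atTop).eventually_ge_atTop x]
    with n hn
  exact ((h.ddf _).1 hn).trans (hP (φ n))

/-- The witness is the probabilistic radius `R_A`; D-compactness makes it reach `1`. -/
lemma dBounded_of_dCompact (hD : ∀ p : V, InDPlus (ν p)) {A : Set V} (hA : DCompact ν A) :
    DBounded ν A := by
  rcases A.eq_empty_or_nonempty with rfl | hAne
  · exact ⟨eps0, ddf_eps0, inDPlus_eps0, fun p hp => hp.elim⟩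
  have := hAne.to_subtype
  have hν : ∀ p : A, DDF (ν p) := fun p => h.ddf p
  have hR := DDF.leftLim_iInf hν
  refine ⟨probRadius ν A, ?_, ?_, fun p hp => ?_⟩ <;> rw [probRadius_eq_leftLim h.ddf hAne]
  · exact hR
  · refine tendsto_order.2
      ⟨fun a ha => ?_, fun a ha => .of_forall fun x => (hR.le_one x).trans_lt ha⟩
    obtain ⟨c, hac, hc⟩ := exists_between ha
    obtain ⟨x, hx⟩ := h.exists_forall_lt_nu_of_dCompact hD hA hc
    filter_upwards [eventually_gt_atTop x] with y hy
    exact hac.trans_le ((le_ciInf fun p : A => (hx p p.2).le).trans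
      ((DDF.monotone_iInf hν).le_leftLim hy))
  · exact DDF.leftLim_iInf_le hν ⟨p, hp⟩

section Archimedean

variable (harch : IsArchimedean τs)
include harch

/-- The supremum is `τs`-idempotent by `n4`, hence `ε₀` or `ε∞`, and it lies above `ν p`. -/
lemma iSup_nu_inv_two_pow_smul {p : V} (hne : ν p ≠ epsInf) :
    (fun x => ⨆ k : ℕ, ν ((2⁻¹ : ℝ) ^ k • p) x) = eps0 := by
  set g : ℕ → ℝ → ℝ := fun k => ν ((2⁻¹ : ℝ) ^ k • p)
  have hg : ∀ k, DDF (g k) := fun _ => h.ddf _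
  have hF := DDF.iSup hg
  have hle : ∀ k, g k ≤ fun x => ⨆ k, g k x := fun k x => le_ciSup (DDF.bddAbove_range hg x) k
  have hhalf : ∀ k, g k ≤ τs (g (k + 1)) (g (k + 1)) := fun k => by
    simpa only [g, smul_smul, show (2 : ℝ) * 2⁻¹ ^ (k + 1) = 2⁻¹ ^ k by ring] using
      h.nu_two_smul_le ((2⁻¹ : ℝ) ^ (k + 1) • p)
  refine (harch.eq_eps0_or_eq_epsInf h.tris hF fun x => ciSup_le fun k => ?_).resolve_right
    fun hinf => hne (funext fun x => le_antisymm ?_ ((h.ddf p).nonneg x))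
  · exact (hhalf k x).trans (h.tris.mono (hg _) hF (hg _) hF (hle _) (hle _) x)
  · simpa [g] using (hle 0 x).trans_eq (congrFun hinf x)

lemma tendstoEps0_nu_smul {p : V} (hne : ν p ≠ epsInf) {t : ℕ → ℝ}
    (ht : Tendsto t atTop (𝓝 0)) : TendstoEps0 fun n => ν (t n • p) := by
  intro l hl
  have hsup : 1 - l < ⨆ k : ℕ, ν ((2⁻¹ : ℝ) ^ k • p) l := by
    rw [congrFun (h.iSup_nu_inv_two_pow_smul harch hne) l, eps0, if_neg (not_le.mpr hl)]
    linarith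
  obtain ⟨k, hk⟩ := exists_lt_of_lt_ciSup hsup
  have habs : Tendsto (fun n => |t n|) atTop (𝓝 0) := by simpa using ht.abs
  filter_upwards [habs.eventually (gt_mem_nhds (by positivity : (0 : ℝ) < 2⁻¹ ^ k))] with n hn
  refine hk.trans_le (h.nu_smul_le_of_abs_le p ?_ l)
  rw [abs_of_pos (a := (2⁻¹ : ℝ) ^ k) (by positivity)]
  exact hn.le

lemma tendstoEps0_nu_sum (hne : ∀ p : V, ν p ≠ epsInf) {ι : Type*} (s : Finset ι) (e : ι → V)
    {t : ℕ → ι → ℝ} (ht : ∀ i, Tendsto (fun n => t n i) atTop (𝓝 0)) :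
    TendstoEps0 fun n => ν (∑ i ∈ s, t n i • e i) := by
  induction s using Finset.cons_induction with
  | empty =>
    intro l hl
    refine Eventually.of_forall fun n => ?_
    simp only [Finset.sum_empty, h.nu_zero, eps0, if_neg (not_le.mpr hl)]
    linarith
  | cons a s ha ih =>
    refine (TendstoEps0.tau h.tri (fun _ => h.ddf _) (fun _ => h.ddf _)
      (h.tendstoEps0_nu_smul harch (hne (e a)) (ht a)) ih).mono fun n => ?_
    rw [Finset.sum_cons]
    exact h.n3 _ _

lemma strongConv_of_tendsto_equivFun (hne : ∀ p : V, ν p ≠ epsInf) {ι : Type*} [Fintype ι]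
    (b : Module.Basis ι ℝ V) {q : ℕ → V} {p : V}
    (hq : Tendsto (fun n => b.equivFun (q n)) atTop (𝓝 (b.equivFun p))) : StrongConv ν q p := by
  have hcoord : ∀ i, Tendsto (fun n => b.equivFun (q n) i - b.equivFun p i) atTop (𝓝 0) :=
    fun i => by simpa using (tendsto_pi_nhds.1 hq i).sub_const (b.equivFun p i)
  have hrepr : ∀ n, ∑ i, (b.equivFun (q n) i - b.equivFun p i) • b i = q n - p := fun n => by
    simpa only [map_sub, Pi.sub_apply] using b.sum_equivFun (q n - p)
  intro l hl
  simpa only [hrepr] using h.tendstoEps0_nu_sum harch hne Finset.univ b hcoord l hl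

/-- The regularized infimum is again `τs`-idempotent, by `n4` and the continuity of `τs`;
it cannot be `ε₀` unless `e = 0`. -/
lemma leftLim_iInf_nu_two_pow_smul {e : V} (he : e ≠ 0) :
    leftLim (fun x => ⨅ k : ℕ, ν ((2 : ℝ) ^ k • e) x) = epsInf := by
  set g : ℕ → ℝ → ℝ := fun k => ν ((2 : ℝ) ^ k • e)
  have hg : ∀ k, DDF (g k) := fun _ => h.ddf _
  have hanti : Antitone g := fun j k hjk => h.nu_smul_le_of_abs_le e <| by
    rw [abs_of_pos (by positivity), abs_of_pos (by positivity)]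
    exact pow_le_pow_right₀ one_le_two hjk
  set H := leftLim fun x => ⨅ k, g k x
  have hH : DDF H := DDF.leftLim_iInf hg
  have hconv : WeakConv g H := DDF.weakConv_leftLim_iInf hg hanti
  have hstep : ∀ j k, j ≤ k → H ≤ τs (g k) (g j) := fun j k hjk => calc
    H ≤ g (k + 1) := DDF.leftLim_iInf_le hg _
    _ ≤ τs (g k) (g k) := by
        simpa only [g, smul_smul, ← pow_succ'] using h.nu_two_smul_le ((2 : ℝ) ^ k • e)
    _ ≤ τs (g k) (g j) := h.tris.mono_right (hg k) (hg k) (hg j) (hanti hjk)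
  have hstep' : ∀ j, H ≤ τs (g j) H := fun j => by
    rw [h.tris.comm (hg j) hH]
    exact h.tris.le_tau_of_weakConv hg hH (hg j) hconv hH
      ((eventually_ge_atTop j).mono fun k hk => hstep j k hk)
  have hidem : H ≤ τs H H :=
    h.tris.le_tau_of_weakConv hg hH hH hconv hH (Eventually.of_forall hstep')
  refine (harch.eq_eps0_or_eq_epsInf h.tris hH hidem).resolve_left fun hH0 => he ?_
  refine (h.n1 e).1 (le_antisymm (h.ddf e).le_eps0 ?_)
  have hH0e : H ≤ g 0 := DDF.leftLim_iInf_le hg 0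
  rw [hH0] at hH0e
  simpa [g] using hH0e

lemma exists_nu_two_pow_smul_lt {e : V} (he : e ≠ 0) (x : ℝ) {c : ℝ} (hc : 0 < c) :
    ∃ k : ℕ, ν ((2 : ℝ) ^ k • e) x < c := by
  have hm := DDF.monotone_iInf fun k : ℕ => h.ddf ((2 : ℝ) ^ k • e)
  refine exists_lt_of_ciInf_lt ((hm.le_leftLim (lt_add_one x)).trans_lt ?_)
  rwa [h.leftLim_iInf_nu_two_pow_smul harch he]

lemma eq_zero_of_forall_le_nu_two_pow_smul {G : ℝ → ℝ} (hG : InDPlus G) {u : V}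
    (hu : ∀ k : ℕ, G ≤ ν ((2 : ℝ) ^ k • u)) : u = 0 := by
  by_contra hu0
  obtain ⟨x, hx⟩ := (hG.eventually (lt_mem_nhds one_pos)).exists
  obtain ⟨k, hk⟩ := h.exists_nu_two_pow_smul_lt harch hu0 x hx
  exact hk.not_ge (hu k x)

lemma le_nu_smul_of_tendsto_equivFun (hne : ∀ p : V, ν p ≠ epsInf) {ι : Type*} [Fintype ι]
    (b : Module.Basis ι ℝ V) {G : ℝ → ℝ} (hG : DDF G) {p : ℕ → V} (hGp : ∀ n, G ≤ ν (p n))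
    {r : ℕ → ℝ} (hr : Tendsto r atTop atTop) {u : V}
    (hu : Tendsto (fun n => b.equivFun ((r n)⁻¹ • p n)) atTop (𝓝 (b.equivFun u)))
    {ρ : ℝ} (hρ : 0 < ρ) : G ≤ ν (ρ • u) := by
  refine h.le_nu_of_strongConv hG (q := fun n => ρ • (r n)⁻¹ • p n)
    (h.strongConv_of_tendsto_equivFun harch hne b ?_) ?_
  · simpa only [map_smul] using hu.const_smul ρ
  filter_upwards [hr.eventually_ge_atTop ρ] with n hn
  have hrn : 0 < r n := hρ.trans_le hn
  have habs : |ρ * (r n)⁻¹| ≤ |1| := by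
    rw [abs_one, abs_mul, abs_of_pos hρ, abs_inv, abs_of_pos hrn, ← div_eq_mul_inv]
    exact div_le_one_of_le₀ hn hrn.le
  have hpn := h.nu_smul_le_of_abs_le (p n) habs
  rw [one_smul] at hpn
  simpa only [smul_smul] using (hGp n).trans hpn

/-- Normalizing an unbounded sequence of coordinates produces a nonzero direction `u` with
`G ≤ ν (ρ • u)` for every `ρ > 0`. -/
lemma isBounded_equivFun_image (hne : ∀ p : V, ν p ≠ epsInf) {ι : Type*} [Fintype ι]
    (b : Module.Basis ι ℝ V) {A : Set V} (hA : DBounded ν A) :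
    Bornology.IsBounded (b.equivFun '' A) := by
  obtain ⟨G, hG, hGD, hGA⟩ := hA
  rw [isBounded_iff_forall_norm_le]
  by_contra! hunb
  have hexists : ∀ n : ℕ, ∃ p ∈ A, (n : ℝ) < ‖b.equivFun p‖ := fun n => by
    obtain ⟨_, ⟨p, hpA, rfl⟩, hp⟩ := hunb n
    exact ⟨p, hpA, hp⟩
  choose p hpA hp using hexists
  set r := fun n => ‖b.equivFun (p n)‖
  have hr : Tendsto r atTop atTop :=
    tendsto_atTop_mono (fun n => (hp n).le) tendsto_natCast_atTop_atTop
  have hr0 : ∀ n, 0 < r n := fun n => (Nat.cast_nonneg n).trans_lt (hp n)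
  have hsph : ∀ n, b.equivFun ((r n)⁻¹ • p n) ∈ Metric.sphere (0 : ι → ℝ) 1 := fun n => by
    rw [mem_sphere_zero_iff_norm, map_smul, norm_smul, norm_inv, Real.norm_eq_abs,
      abs_of_pos (hr0 n), inv_mul_cancel₀ (hr0 n).ne']
  obtain ⟨u, hu, χ, hχ, hconv⟩ := (isCompact_sphere (0 : ι → ℝ) 1).tendsto_subseq hsph
  have hu0 : b.equivFun.symm u = 0 := h.eq_zero_of_forall_le_nu_two_pow_smul harch hGD fun k =>
    h.le_nu_smul_of_tendsto_equivFun harch hne b hG (fun n => hGA _ (hpA (χ n)))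
      (hr.comp hχ.tendsto_atTop) (by rwa [LinearEquiv.apply_symm_apply]) (by positivity)
  rw [b.equivFun.symm.map_eq_zero_iff.1 hu0, mem_sphere_zero_iff_norm, norm_zero] at hu
  exact zero_ne_one hu

lemma dCompact_of_dBounded_of_seqClosed [FiniteDimensional ℝ V] (hne : ∀ p : V, ν p ≠ epsInf)
    {A : Set V} (hb : DBounded ν A) (hcl : SeqClosed ν A) : DCompact ν A := by
  intro q hq
  let b := Module.finBasis ℝ V
  obtain ⟨a, -, φ, hφ, ha⟩ := tendsto_subseq_of_bounded
    (h.isBounded_equivFun_image harch hne b hb) fun n => mem_image_of_mem b.equivFun (hq n)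
  have hconv : StrongConv ν (q ∘ φ) (b.equivFun.symm a) :=
    h.strongConv_of_tendsto_equivFun harch hne b (by rwa [LinearEquiv.apply_symm_apply])
  exact ⟨φ, hφ, _, hcl _ _ (fun n => hq (φ n)) hconv, hconv⟩

end Archimedean

end IsPNSpace

theorem statement16_general {V : Type} [AddCommGroup V] [Module ℝ V]
    [FiniteDimensional ℝ V]
    (ν : V → ℝ → ℝ) (τ τs : (ℝ → ℝ) → (ℝ → ℝ) → (ℝ → ℝ))
    (h : IsPNSpace V ν τ τs) (harch : IsArchimedean τs)
    (hne : ∀ p : V, ν p ≠ epsInf)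
    (hD : ∀ p : V, InDPlus (ν p))
    (A : Set V) :
    DCompact ν A ↔ DBounded ν A ∧ SeqClosed ν A :=
  ⟨fun hA => ⟨h.dBounded_of_dCompact hD hA, h.seqClosed_of_dCompact hA⟩,
    fun ⟨hb, hcl⟩ => h.dCompact_of_dBounded_of_seqClosed harch hne hb hcl⟩

/-- In a finite dimensional strong-TVS PN space with `ν(V) ⊆ D⁺`,
`τ`-invariant `D⁺`, over `ℝ` with an LG-property probabilistic norm:
`A` is `D`-compact iff `A` is `D`-bounded and closed. -/
theorem statement16 {V : Type} [AddCommGroup V] [Module ℝ V]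
    [FiniteDimensional ℝ V]
    (ν : V → ℝ → ℝ) (τ τs : (ℝ → ℝ) → (ℝ → ℝ) → (ℝ → ℝ))
    (h : IsPNSpace V ν τ τs) (harch : IsArchimedean τs)
    (hne : ∀ p : V, ν p ≠ epsInf)
    (hD : ∀ p : V, InDPlus (ν p))
    (hInv : ∀ F G, DDF F → DDF G → InDPlus F → InDPlus G → InDPlus (τ F G))
    (ν' : ℝ → ℝ → ℝ) (τ' τ's : (ℝ → ℝ) → (ℝ → ℝ) → (ℝ → ℝ))
    (h' : IsPNSpace ℝ ν' τ' τ's)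
    (hLG : ∀ x : ℝ, 0 < x →
      Tendsto (fun r : ℝ => ν' r x) (comap (fun r : ℝ => |r|) atTop) (nhds 0))
    (A : Set V) :
    DCompact ν A ↔ DBounded ν A ∧ SeqClosed ν A :=
  statement16_general ν τ τs h harch hne hD A
end
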